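/- arXiv:2311.03063 — 2 statements merged into one kernel-verified Lean document; each statement's English description precedes it below -/
import Mathlib

section
/- Optimality of the Bellman fixed point for the linear program (Proposition 2): let Z carry a measurable-space structure and let c be a finite measure on Z. Let Q* : Z → ℝ be a bounded measurable function satisfying the coupled Bellman optimality equation Q*(z) = l(z) + γ · inf_{u ∈ U} Q*(σ(z,u)) for all z ∈ Z. Then (i) Q* is feasible for the relaxed linear constraints, i.e., Q*(z) ≤ l(z) + γ Q*(σ(z,u)) for all z ∈ Z and u ∈ U; and (ii) for every bounded measurable Q : Z → ℝ satisfying Q(z) ≤ l(z) + γ Q(σ(z,u)) for all z ∈ Z and u ∈ U, one has ∫ Q dc ≤ ∫ Q* dc. Hence Q* is an optimizer of the linear program maximizing ∫ Q dc over all bounded measurable functions satisfying the relaxed constraints. -/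
open MeasureTheory

/-- Optimality of the Bellman fixed point for the linear program (Proposition 2):
a bounded measurable solution `Q*` of the coupled Bellman optimality equation is
feasible for the relaxed linear constraints and maximizes `∫ Q dc` among all bounded
measurable functions satisfying them. -/
theorem bellman_fixed_point_LP_optimal {Z U : Type*} [Nonempty Z] [Nonempty U]
    [MeasurableSpace Z] (c : Measure Z) [IsFiniteMeasure c]
    (σ : Z → U → Z) (l : Z → ℝ) (γ : ℝ) (hγ0 : 0 < γ) (hγ1 : γ < 1)
    (hl : ∃ M : ℝ, ∀ z, |l z| ≤ M)
    (Qstar : Z → ℝ) (hQstarMeas : Measurable Qstar)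
    (hQstarBdd : ∃ M : ℝ, ∀ z, |Qstar z| ≤ M)
    (hfix : ∀ z, Qstar z = l z + γ * ⨅ u : U, Qstar (σ z u)) :
    (∀ (z : Z) (u : U), Qstar z ≤ l z + γ * Qstar (σ z u)) ∧
      (∀ Q : Z → ℝ, Measurable Q → (∃ M : ℝ, ∀ z, |Q z| ≤ M) →
        (∀ (z : Z) (u : U), Q z ≤ l z + γ * Q (σ z u)) →
        ∫ z, Q z ∂c ≤ ∫ z, Qstar z ∂c) := by
  obtain ⟨Ms, hMs⟩ := hQstarBdd
  have hbdd : ∀ z : Z, BddBelow (Set.range fun u : U => Qstar (σ z u)) := by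
    intro z
    exact ⟨-Ms, by rintro x ⟨u, rfl⟩; exact neg_le_of_abs_le (hMs _)⟩
  have feas : ∀ (z : Z) (u : U), Qstar z ≤ l z + γ * Qstar (σ z u) := by
    intro z u
    rw [hfix z]
    have : (⨅ u : U, Qstar (σ z u)) ≤ Qstar (σ z u) := ciInf_le (hbdd z) u
    nlinarith
  refine ⟨feas, ?_⟩
  intro Q hQMeas hQBdd hQfeas
  obtain ⟨MQ, hMQ⟩ := hQBdd
  -- pointwise Q ≤ Qstar
  set d : Z → ℝ := fun z => Q z - Qstar z with hd
  have hdbdd : BddAbove (Set.range d) := by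
    refine ⟨MQ + Ms, ?_⟩
    rintro x ⟨z, rfl⟩
    have h1 := abs_le.1 (hMQ z)
    have h2 := abs_le.1 (hMs z)
    simp only [hd]; linarith [h1.2, h2.1]
  set S : ℝ := ⨆ z, d z with hS
  have hkey : ∀ z, d z ≤ γ * S := by
    intro z
    have hall : ∀ ε > (0:ℝ), d z ≤ γ * (S + ε) := by
      intro ε hε
      have hlt : (⨅ u : U, Qstar (σ z u)) < (⨅ u : U, Qstar (σ z u)) + ε := by linarith
      obtain ⟨u, hu⟩ := exists_lt_of_ciInf_lt hlt
      have hQ := hQfeas z u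
      have hQs : Qstar z = l z + γ * ⨅ u : U, Qstar (σ z u) := hfix z
      have hdS : d (σ z u) ≤ S := le_ciSup hdbdd (σ z u)
      have : d z ≤ γ * (Q (σ z u) - Qstar (σ z u) + ε) := by
        simp only [hd]; nlinarith
      calc d z ≤ γ * (d (σ z u) + ε) := this
        _ ≤ γ * (S + ε) := by nlinarith
    have := ge_of_tendsto (f := fun ε : ℝ => γ * (S + ε)) (x := nhdsWithin 0 (Set.Ioi 0))
      (by
        have : Filter.Tendsto (fun ε : ℝ => γ * (S + ε)) (nhds 0) (nhds (γ * (S + 0))) := by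
          exact ((continuous_const.mul (continuous_const.add continuous_id)).tendsto 0)
        simpa using this.mono_left nhdsWithin_le_nhds)
      (by filter_upwards [self_mem_nhdsWithin] with ε hε using hall ε hε)
    simpa using this
  have hSle : S ≤ γ * S := ciSup_le hkey
  have hS0 : S ≤ 0 := by nlinarith
  have hle : ∀ z, Q z ≤ Qstar z := by
    intro z
    have : d z ≤ S := le_ciSup hdbdd z
    have := this.trans hS0
    simpa [hd, sub_nonpos] using this
  have hQint : Integrable Q c :=
    ⟨hQMeas.aestronglyMeasurable, HasFiniteIntegral.of_bounded
      (C := MQ) (ae_of_all _ fun z => by simpa using hMQ z)⟩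
  have hQsint : Integrable Qstar c :=
    ⟨hQstarMeas.aestronglyMeasurable, HasFiniteIntegral.of_bounded
      (C := Ms) (ae_of_all _ fun z => by simpa using hMs z)⟩
  exact integral_mono hQint hQsint hle
end

section
/- Multi-step value iteration: monotonicity and geometric convergence (abstract single-player form of Theorem 2): let Z and U be nonempty sets, σ : Z → U → Z, l : Z → ℝ bounded, γ ∈ (0,1). For a policy μ : Z → U define (T_μ Q)(z) = l(z) + γ Q(σ(z, μ(z))), and let (C Q)(z) = l(z) + γ inf_{u ∈ U} Q(σ(z,u)), so C Q ≤ T_μ Q for every μ. Let Q* be a bounded fixed point of C, let Q^0 be bounded with C Q^0 ≤ Q^0 pointwise, let (H_p)_{p ∈ ℕ} be integers with H_p ≥ 1, and suppose for every p there is a greedy policy μ_p with T_{μ_p} Q^p = C Q^p, where Q^{p+1} := T_{μ_p}^{H_p} Q^p. Then for all p ∈ ℕ: (i) Q*(z) ≤ Q^{p+1}(z) ≤ (C Q^p)(z) ≤ Q^p(z) for all z ∈ Z (so the sequence is pointwise nonincreasing); and (ii) sup_{z ∈ Z} |Q^p(z) − Q*(z)| ≤ γ^p · sup_{z ∈ Z}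 |Q^0(z) − Q*(z)|, so Q^p converges uniformly to Q*. -/
/-- The coupled Bellman operator `(C Q)(z) = l(z) + γ · inf_{u ∈ U} Q(σ(z,u))`. -/
noncomputable def coupledBellman {Z U : Type*} (σ : Z → U → Z) (l : Z → ℝ) (γ : ℝ)
    (Q : Z → ℝ) (z : Z) : ℝ :=
  l z + γ * ⨅ u : U, Q (σ z u)

/-- The policy rollout operator `(T_μ Q)(z) = l(z) + γ · Q(σ(z, μ(z)))`. -/
noncomputable def policyRollout {Z U : Type*} (σ : Z → U → Z) (l : Z → ℝ) (γ : ℝ)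
    (μ : Z → U) (Q : Z → ℝ) (z : Z) : ℝ :=
  l z + γ * Q (σ z (μ z))

section Helpers

variable {Z U : Type*} [Nonempty U] {σ : Z → U → Z} {l : Z → ℝ} {γ : ℝ}

lemma msqvi_bddRange {Q : Z → ℝ} {M : ℝ} (hQ : ∀ z, |Q z| ≤ M) (z : Z) :
    BddBelow (Set.range fun u => Q (σ z u)) :=
  ⟨-M, by rintro x ⟨u, rfl⟩; linarith [(abs_le.1 (hQ (σ z u))).1]⟩

lemma msqvi_abs_iInf_le {Q : Z → ℝ} {M : ℝ} (hQ : ∀ z, |Q z| ≤ M) (z : Z) :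
    |⨅ u : U, Q (σ z u)| ≤ M := by
  rw [abs_le]
  refine ⟨le_ciInf fun u => (abs_le.1 (hQ _)).1, ?_⟩
  exact (ciInf_le (msqvi_bddRange hQ z) (Classical.arbitrary U)).trans (abs_le.1 (hQ _)).2

lemma msqvi_C_le_T (hγ : 0 ≤ γ) {Q : Z → ℝ} {M : ℝ} (hQ : ∀ z, |Q z| ≤ M)
    (μ : Z → U) (z : Z) :
    coupledBellman σ l γ Q z ≤ policyRollout σ l γ μ Q z := by
  unfold coupledBellman policyRollout
  have h := ciInf_le (msqvi_bddRange (σ := σ) hQ z) (μ z)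
  nlinarith

lemma msqvi_C_mono (hγ : 0 ≤ γ) {Q Q' : Z → ℝ} {M : ℝ} (hQ : ∀ z, |Q z| ≤ M)
    (h : ∀ z, Q z ≤ Q' z) (z : Z) :
    coupledBellman σ l γ Q z ≤ coupledBellman σ l γ Q' z := by
  unfold coupledBellman
  have hi : (⨅ u : U, Q (σ z u)) ≤ ⨅ u : U, Q' (σ z u) :=
    ciInf_mono (msqvi_bddRange hQ z) fun u => h _
  nlinarith

lemma msqvi_T_mono (hγ : 0 ≤ γ) {Q Q' : Z → ℝ} (h : ∀ z, Q z ≤ Q' z)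
    (μ : Z → U) (z : Z) :
    policyRollout σ l γ μ Q z ≤ policyRollout σ l γ μ Q' z := by
  unfold policyRollout
  nlinarith [h (σ z (μ z))]

lemma msqvi_T_bdd (hγ : 0 ≤ γ) {Ml M : ℝ} (hl : ∀ z, |l z| ≤ Ml) {Q : Z → ℝ}
    (hQ : ∀ z, |Q z| ≤ M) (μ : Z → U) (z : Z) :
    |policyRollout σ l γ μ Q z| ≤ Ml + γ * M := by
  unfold policyRollout
  calc |l z + γ * Q (σ z (μ z))| ≤ |l z| + |γ * Q (σ z (μ z))| := abs_add_le _ _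
    _ ≤ Ml + γ * M := by
        rw [abs_mul, abs_of_nonneg hγ]
        exact add_le_add (hl z) (mul_le_mul_of_nonneg_left (hQ _) hγ)

lemma msqvi_C_bdd (hγ : 0 ≤ γ) {Ml M : ℝ} (hl : ∀ z, |l z| ≤ Ml) {Q : Z → ℝ}
    (hQ : ∀ z, |Q z| ≤ M) (z : Z) :
    |coupledBellman σ l γ Q z| ≤ Ml + γ * M := by
  unfold coupledBellman
  calc |l z + γ * ⨅ u : U, Q (σ z u)| ≤ |l z| + |γ * ⨅ u : U, Q (σ z u)| := abs_add_le _ _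
    _ ≤ Ml + γ * M := by
        rw [abs_mul, abs_of_nonneg hγ]
        exact add_le_add (hl z) (mul_le_mul_of_nonneg_left (msqvi_abs_iInf_le hQ z) hγ)

lemma msqvi_C_contract (hγ : 0 ≤ γ) {Q Q' : Z → ℝ} {M M' D : ℝ}
    (hQ : ∀ z, |Q z| ≤ M) (hQ' : ∀ z, |Q' z| ≤ M')
    (h : ∀ z, |Q z - Q' z| ≤ D) (z : Z) :
    |coupledBellman σ l γ Q z - coupledBellman σ l γ Q' z| ≤ γ * D := by
  unfold coupledBellman
  have h1 : (⨅ u : U, Q (σ z u)) - D ≤ ⨅ u : U, Q' (σ z u) := by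
    refine le_ciInf fun u => ?_
    have ha := ciInf_le (msqvi_bddRange (σ := σ) hQ z) u
    have hb := (abs_le.1 (h (σ z u))).2
    linarith
  have h2 : (⨅ u : U, Q' (σ z u)) - D ≤ ⨅ u : U, Q (σ z u) := by
    refine le_ciInf fun u => ?_
    have ha := ciInf_le (msqvi_bddRange (σ := σ) hQ' z) u
    have hb := (abs_le.1 (h (σ z u))).1
    linarith
  have key : |(⨅ u : U, Q (σ z u)) - ⨅ u : U, Q' (σ z u)| ≤ D := by
    rw [abs_le]; constructor <;> linarith
  have heq : l z + γ * (⨅ u : U, Q (σ z u)) - (l z + γ * ⨅ u : U, Q' (σ z u))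
      = γ * ((⨅ u : U, Q (σ z u)) - ⨅ u : U, Q' (σ z u)) := by ring
  rw [heq, abs_mul, abs_of_nonneg hγ]
  exact mul_le_mul_of_nonneg_left key hγ

lemma msqvi_T_iter_mono (hγ : 0 ≤ γ) {Q Q' : Z → ℝ} (h : ∀ z, Q z ≤ Q' z)
    (μ : Z → U) (k : ℕ) : ∀ z,
    (policyRollout σ l γ μ)^[k] Q z ≤ (policyRollout σ l γ μ)^[k] Q' z := by
  induction k with
  | zero => simpa using h
  | succ k ih =>
    intro z
    rw [Function.iterate_succ_apply', Function.iterate_succ_apply']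
    exact msqvi_T_mono hγ ih μ z

end Helpers

/-- Multi-step value iteration: monotonicity and geometric convergence (abstract
single-player form of Theorem 2). -/
theorem msqvi_monotone_convergence {Z U : Type*} [Nonempty Z] [Nonempty U]
    (σ : Z → U → Z) (l : Z → ℝ) (γ : ℝ) (hγ0 : 0 < γ) (hγ1 : γ < 1)
    (hl : ∃ M : ℝ, ∀ z, |l z| ≤ M)
    (Qstar : Z → ℝ) (hQstarBdd : ∃ M : ℝ, ∀ z, |Qstar z| ≤ M)
    (hfix : ∀ z, Qstar z = coupledBellman σ l γ Qstar z)
    (Q : ℕ → Z → ℝ) (hQ0Bdd : ∃ M : ℝ, ∀ z, |Q 0 z| ≤ M)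
    (hinit : ∀ z, coupledBellman σ l γ (Q 0) z ≤ Q 0 z)
    (H : ℕ → ℕ) (hH : ∀ p, 1 ≤ H p)
    (μseq : ℕ → Z → U)
    (hgreedy : ∀ p, policyRollout σ l γ (μseq p) (Q p) = coupledBellman σ l γ (Q p))
    (hstep : ∀ p, Q (p + 1) = (policyRollout σ l γ (μseq p))^[H p] (Q p)) :
    (∀ (p : ℕ) (z : Z),
        Qstar z ≤ Q (p + 1) z ∧
          Q (p + 1) z ≤ coupledBellman σ l γ (Q p) z ∧
          coupledBellman σ l γ (Q p) z ≤ Q p z) ∧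
      (∀ p : ℕ, (⨆ z : Z, |Q p z - Qstar z|) ≤
        γ ^ p * ⨆ z : Z, |Q 0 z - Qstar z|) := by
  obtain ⟨Ml, hMl⟩ := hl
  obtain ⟨Ms, hMs⟩ := hQstarBdd
  obtain ⟨M0, hM0⟩ := hQ0Bdd
  have hγ : (0:ℝ) ≤ γ := hγ0.le
  have hQsfix : coupledBellman σ l γ Qstar = Qstar := funext fun z => (hfix z).symm
  -- boundedness of iterates
  have hbddT : ∀ (μ : Z → U) (k : ℕ) (Qf : Z → ℝ), (∃ M, ∀ z, |Qf z| ≤ M) →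
      ∃ M, ∀ z, |(policyRollout σ l γ μ)^[k] Qf z| ≤ M := by
    intro μ k
    induction k with
    | zero => intro Qf h; simpa using h
    | succ k ih =>
      intro Qf h
      obtain ⟨M, hM⟩ := ih Qf h
      refine ⟨Ml + γ * M, fun z => ?_⟩
      rw [Function.iterate_succ_apply']
      exact msqvi_T_bdd hγ hMl hM μ z
  have hbddQ : ∀ p, ∃ M, ∀ z, |Q p z| ≤ M := by
    intro p
    induction p with
    | zero => exact ⟨M0, hM0⟩
    | succ p ih => rw [hstep p]; exact hbddT _ _ _ ih
  -- chain: iterates decrease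
  have hchain : ∀ p, (∀ z, coupledBellman σ l γ (Q p) z ≤ Q p z) →
      ∀ k z, (policyRollout σ l γ (μseq p))^[k+1] (Q p) z ≤
        (policyRollout σ l γ (μseq p))^[k] (Q p) z := by
    intro p hp k z
    rw [Function.iterate_succ_apply]
    refine msqvi_T_iter_mono hγ (fun w => ?_) (μseq p) k z
    rw [hgreedy p]
    exact hp w
  have hdom : ∀ p, (∀ z, coupledBellman σ l γ (Q p) z ≤ Q p z) →
      ∀ k z, (policyRollout σ l γ (μseq p))^[k+1] (Q p) z ≤
        coupledBellman σ l γ (Q p) z := by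
    intro p hp k
    induction k with
    | zero =>
      intro z
      rw [zero_add, Function.iterate_one, hgreedy p]
    | succ k ih =>
      intro z
      exact le_trans (hchain p hp (k+1) z) (ih z)
  have hHk : ∀ p, ∃ k, H p = k + 1 := fun p =>
    ⟨H p - 1, (Nat.succ_pred_eq_of_pos (hH p)).symm⟩
  -- invariant: C (Q p) ≤ Q p
  have hinv : ∀ p, ∀ z, coupledBellman σ l γ (Q p) z ≤ Q p z := by
    intro p
    induction p with
    | zero => exact hinit
    | succ p ih =>
      intro z
      obtain ⟨k, hk⟩ := hHk p
      have hQp1 : Q (p+1) = (policyRollout σ l γ (μseq p))^[k+1] (Q p) := by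
        rw [hstep p, hk]
      obtain ⟨M1, hM1⟩ := hbddQ (p+1)
      calc coupledBellman σ l γ (Q (p+1)) z
          ≤ policyRollout σ l γ (μseq p) (Q (p+1)) z := msqvi_C_le_T hγ hM1 _ z
        _ = (policyRollout σ l γ (μseq p))^[(k+1)+1] (Q p) z := by
            rw [hQp1]
            exact (congrFun (Function.iterate_succ_apply' _ (k+1) _) z).symm
        _ ≤ (policyRollout σ l γ (μseq p))^[k+1] (Q p) z := hchain p ih (k+1) z
        _ = Q (p+1) z := by rw [hQp1]
  have hle2 : ∀ p z, Q (p+1) z ≤ coupledBellman σ l γ (Q p) z := by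
    intro p z
    obtain ⟨k, hk⟩ := hHk p
    rw [hstep p, hk]
    exact hdom p (hinv p) k z
  -- pointwise distance bound at p = 0
  have hD0 : ∀ z, |Q 0 z - Qstar z| ≤ M0 + Ms := by
    intro z
    have h := abs_add_le (Q 0 z) (-(Qstar z))
    rw [← sub_eq_add_neg, abs_neg] at h
    linarith [hM0 z, hMs z]
  -- iterates of C on Q 0
  have hCn : ∀ n, (∃ M, ∀ z, |(coupledBellman σ l γ)^[n] (Q 0) z| ≤ M) ∧
      (∀ z, |(coupledBellman σ l γ)^[n] (Q 0) z - Qstar z| ≤ γ^n * (M0 + Ms)) := by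
    intro n
    induction n with
    | zero => exact ⟨⟨M0, by simpa using hM0⟩, by simpa using hD0⟩
    | succ n ih =>
      obtain ⟨⟨M, hM⟩, hc⟩ := ih
      constructor
      · refine ⟨Ml + γ * M, fun z => ?_⟩
        rw [Function.iterate_succ_apply']
        exact msqvi_C_bdd hγ hMl hM z
      · intro z
        rw [Function.iterate_succ_apply']
        have h := msqvi_C_contract (σ := σ) (l := l) hγ hM hMs hc z
        rw [hQsfix] at h
        have heq : γ^(n+1) * (M0 + Ms) = γ * (γ^n * (M0 + Ms)) := by ring
        linarith
  -- C^[n] (Q 0) decreases and stays below Q 0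
  have hCchain : ∀ n z, (coupledBellman σ l γ)^[n+1] (Q 0) z ≤
      (coupledBellman σ l γ)^[n] (Q 0) z := by
    intro n
    induction n with
    | zero =>
      intro z
      simp only [Function.iterate_one, Function.iterate_zero, id]
      exact hinit z
    | succ n ih =>
      intro z
      obtain ⟨M, hM⟩ := (hCn (n+1)).1
      simp only [Function.iterate_succ_apply'] at hM ih ⊢
      exact msqvi_C_mono hγ hM (fun w => ih w) z
  have hCle : ∀ n z, (coupledBellman σ l γ)^[n] (Q 0) z ≤ Q 0 z := by
    intro n
    induction n with
    | zero => intro z; simp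
    | succ n ih => intro z; exact le_trans (hCchain n z) (ih z)
  -- Q* ≤ Q 0
  have hQs0 : ∀ z, Qstar z ≤ Q 0 z := by
    intro z
    have key : ∀ n, Qstar z - Q 0 z ≤ γ^n * (M0 + Ms) := by
      intro n
      have h1 := ((hCn n).2 z)
      have h2 := hCle n z
      have h3 := (abs_le.1 h1).1
      linarith
    have ht : Filter.Tendsto (fun n => γ^n * (M0 + Ms)) Filter.atTop (nhds 0) := by
      have := (tendsto_pow_atTop_nhds_zero_of_lt_one hγ hγ1).mul_const (M0 + Ms)
      simpa using this
    have := ge_of_tendsto' ht key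
    linarith
  -- Q* ≤ Q p for all p
  have hQsle : ∀ p z, Qstar z ≤ Q p z := by
    intro p
    induction p with
    | zero => exact hQs0
    | succ p ih =>
      have hk : ∀ k z, Qstar z ≤ (policyRollout σ l γ (μseq p))^[k] (Q p) z := by
        intro k
        induction k with
        | zero => simpa using ih
        | succ k ihk =>
          intro z
          rw [Function.iterate_succ_apply']
          obtain ⟨M, hM⟩ := hbddT (μseq p) k (Q p) (hbddQ p)
          calc Qstar z = coupledBellman σ l γ Qstar z := hfix z
            _ ≤ coupledBellman σ l γ ((policyRollout σ l γ (μseq p))^[k] (Q p)) z :=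
                msqvi_C_mono hγ hMs ihk z
            _ ≤ policyRollout σ l γ (μseq p)
                  ((policyRollout σ l γ (μseq p))^[k] (Q p)) z :=
                msqvi_C_le_T hγ hM _ z
      intro z
      rw [hstep p]
      exact hk (H p) z
  -- sup bounds
  have hbddSup : ∀ p, BddAbove (Set.range fun z => |Q p z - Qstar z|) := by
    intro p
    obtain ⟨M, hM⟩ := hbddQ p
    refine ⟨M + Ms, ?_⟩
    rintro x ⟨z, rfl⟩
    have h := abs_add_le (Q p z) (-(Qstar z))
    rw [← sub_eq_add_neg, abs_neg] at h
    simp only [Set.mem_setOf_eq]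
    linarith [hM z, hMs z]
  have part2 : ∀ p : ℕ, (⨆ z : Z, |Q p z - Qstar z|) ≤
      γ ^ p * ⨆ z : Z, |Q 0 z - Qstar z| := by
    intro p
    induction p with
    | zero => simp
    | succ p ih =>
      have hDp : ∀ z, |Q p z - Qstar z| ≤ ⨆ z, |Q p z - Qstar z| := fun z =>
        le_ciSup (hbddSup p) z
      have hptw : ∀ z, |Q (p+1) z - Qstar z| ≤ γ * ⨆ z, |Q p z - Qstar z| := by
        intro z
        obtain ⟨Mp, hMp⟩ := hbddQ p
        have hc := msqvi_C_contract (σ := σ) (l := l) hγ hMp hMs hDp z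
        rw [hQsfix] at hc
        have h1 := hQsle (p+1) z
        have h2 := hle2 p z
        have h3 := le_of_abs_le hc
        rw [abs_of_nonneg (by linarith : (0:ℝ) ≤ Q (p+1) z - Qstar z)]
        linarith
      calc (⨆ z : Z, |Q (p+1) z - Qstar z|) ≤ γ * ⨆ z, |Q p z - Qstar z| :=
            ciSup_le hptw
        _ ≤ γ * (γ^p * ⨆ z, |Q 0 z - Qstar z|) := mul_le_mul_of_nonneg_left ih hγ
        _ = γ^(p+1) * ⨆ z, |Q 0 z - Qstar z| := by ring
  exact ⟨fun p z => ⟨hQsle (p+1) z, hle2 p z, hinv p z⟩, part2⟩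
end
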